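/- Exponential-moment bound for the negated excess TD loss: Under the one-step transition model (conditionally on (s,a), |r| ≤ b a.s. with E[r|s,a] = r_h(s,a) and s' ∼ P_h(·|s,a)), for any bounded measurable f_h, f_{h+1} : S × A → [−b, b], any policy π̃, and any 0 ≤ γ ≤ 1/(72(e−2)b²): ln E[ exp(−2γ ΔL_{π̃}(f_h, f_{h+1}; z)) | s,a ] ≤ −2γ (1 − 72(e−2) γ b²) · E_h^{π̃}(f_h, f_{h+1})(s,a)². -/

import Mathlib

open MeasureTheory
open scoped ENNReal

/-- An episodic time-inhomogeneous MDP: measurable state and action spaces, horizon `H`,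
Markov transition kernels `P h : S × A → P(S)`, mean reward functions `r h`, and a fixed
initial state `s1`.  Step indices `h = 1, …, H` are the meaningful ones. -/
structure EpisodicMDP (S A : Type*) [MeasurableSpace S] [MeasurableSpace A] where
  H : ℕ
  P : ℕ → S × A → Measure S
  P_prob : ∀ h sa, IsProbabilityMeasure (P h sa)
  P_meas : ∀ h, Measurable (P h)
  r : ℕ → S × A → ℝ
  r_meas : ∀ h, Measurable (r h)
  s1 : S

variable {S A : Type*} [MeasurableSpace S] [MeasurableSpace A]

/-- A (Markov, time-inhomogeneous) policy, as a family of action kernels `π h : S → P(A)`. -/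
def PolicyKer (S A : Type*) [MeasurableSpace S] [MeasurableSpace A] :=
  ℕ → S → Measure A

/-- `pol` is a genuine policy: each `pol h s` is a probability measure, measurably in `s`. -/
def IsPolicy (pol : PolicyKer S A) : Prop :=
  (∀ h s, IsProbabilityMeasure (pol h s)) ∧ ∀ h, Measurable (pol h)

/-- Backward-recursion helper: `Qaux M rw pol n h` is the action-value function at step `h`
when `n` more reward terms remain (so `n = H + 1 - h` gives `Q_h`, with `Q_{H+1} ≡ 0`). -/
noncomputable def Qaux (M : EpisodicMDP S A) (rw : ℕ → S × A → ℝ) (pol : PolicyKer S A) :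
    ℕ → ℕ → S × A → ℝ
  | 0, _, _ => 0
  | n + 1, h, sa =>
      rw h sa + ∫ s', (∫ a', Qaux M rw pol n (h + 1) (s', a') ∂(pol (h + 1) s')) ∂(M.P h sa)

/-- Action-value function `Q^{pol}_h` in the MDP with transitions of `M` and rewards `rw`
(with the convention `Q_{H+1} ≡ 0`). -/
noncomputable def Qval (M : EpisodicMDP S A) (rw : ℕ → S × A → ℝ) (pol : PolicyKer S A)
    (h : ℕ) : S × A → ℝ :=
  Qaux M rw pol (M.H + 1 - h) h

/-- Value function `V^{pol}_h`. -/
noncomputable def Vval (M : EpisodicMDP S A) (rw : ℕ → S × A → ℝ) (pol : PolicyKer S A)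
    (h : ℕ) (s : S) : ℝ :=
  ∫ a, Qval M rw pol h (s, a) ∂(pol h s)

/-- Law of the state `s_h` (for `h ≥ 1`) along the trajectory generated from the initial
state by the policy `pol`. -/
noncomputable def stateLaw (M : EpisodicMDP S A) (pol : PolicyKer S A) : ℕ → Measure S
  | 0 => Measure.dirac M.s1
  | 1 => Measure.dirac M.s1
  | n + 2 =>
      (((stateLaw M pol (n + 1)).bind
          (fun s => (pol (n + 1) s).map (fun a => ((s, a) : S × A)))).bind (M.P (n + 1)))

/-- Occupancy measure `d^{pol}_h`: the law of `(s_h, a_h)` under `pol` (for `h ≥ 1`). -/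
noncomputable def occLaw (M : EpisodicMDP S A) (pol : PolicyKer S A) (h : ℕ) :
    Measure (S × A) :=
  (stateLaw M pol h).bind (fun s => (pol h s).map (fun a => ((s, a) : S × A)))

/-- The Bellman operator `(T_h^{pol} f)(s,a) = r_h(s,a) + ∫∫ f(s',a') pol_{h+1}(da'|s') P_h(ds'|s,a)`. -/
noncomputable def bellmanOp (M : EpisodicMDP S A) (pol : PolicyKer S A) (h : ℕ)
    (f : S × A → ℝ) : S × A → ℝ :=
  fun sa => M.r h sa + ∫ s', (∫ a', f (s', a') ∂(pol (h + 1) s')) ∂(M.P h sa)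

/-- Bellman error `E_h^{pol}(f_h, f_{h+1}) = T_h^{pol} f_{h+1} − f_h`. -/
noncomputable def bellmanErr (M : EpisodicMDP S A) (pol : PolicyKer S A) (h : ℕ)
    (fh fnext : S × A → ℝ) : S × A → ℝ :=
  fun sa => bellmanOp M pol h fnext sa - fh sa

/-- The reward of the induced MDP `M(Q, pol)`: `r_h − E_h^{pol}(Q_h, Q_{h+1})`. -/
noncomputable def inducedReward (M : EpisodicMDP S A) (pol : PolicyKer S A)
    (Q : ℕ → S × A → ℝ) : ℕ → S × A → ℝ :=
  fun h sa => M.r h sa - bellmanErr M pol h (Q h) (Q (h + 1)) sa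

/-- Sub-optimality of `polT` against the comparator `polC` in the MDP with transitions of
`M` and rewards `rw`. -/
noncomputable def subOpt (M : EpisodicMDP S A) (rw : ℕ → S × A → ℝ)
    (polC polT : PolicyKer S A) : ℝ :=
  Vval M rw polC 1 M.s1 - Vval M rw polT 1 M.s1

/-- The TD loss of a transition `z = (s, a, r, s')`:
`l_{π̃}(g, f_{h+1}; z) = (g(s,a) − r − f_{h+1}(s', π̃_{h+1}))²`. -/
noncomputable def tdLoss (pol : PolicyKer S A) (h : ℕ) (g fnext : S × A → ℝ)
    (z : S × A × ℝ × S) : ℝ :=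
  (g (z.1, z.2.1) - z.2.2.1 - ∫ a', fnext (z.2.2.2, a') ∂(pol (h + 1) z.2.2.2)) ^ 2

/-- The excess TD loss
`ΔL_{π̃}(f_h, f_{h+1}; z) = l_{π̃}(f_h, f_{h+1}; z) − l_{π̃}(T_h^{π̃} f_{h+1}, f_{h+1}; z)`. -/
noncomputable def excessTD (M : EpisodicMDP S A) (pol : PolicyKer S A) (h : ℕ)
    (fh fnext : S × A → ℝ) (z : S × A × ℝ × S) : ℝ :=
  tdLoss pol h fh fnext z - tdLoss pol h (bellmanOp M pol h fnext) fnext z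

open MeasureTheory ProbabilityTheory Real

/-!
Write `m = T_h^{π̃} f_{h+1}(s,a)`, `c = m − f_h(s,a)` and `y = r + f_{h+1}(s', π̃_{h+1})`, so that
`E[y | s,a] = m`. The excess TD loss is then `(f_h − y)² − (m − y)² = c² + 2c (y − m)`, whose
mean is `c²` and whose second moment is `c² (c² + 4 Var y) ≤ 36 b² c²`. Since `γ` is small, the
exponent `−2γ ΔL` lies in `[−1, 1]`, where `exp x ≤ 1 + x + (e − 2) x²`; together with
`log t ≤ t − 1` this bounds the log-moment generating function by its first two moments.
-/

theorem Real.exp_le_one_add_add_exp_one_sub_two_mul_sq {x : ℝ} (hx : |x| ≤ 1) :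
    exp x ≤ 1 + x + (exp 1 - 2) * x ^ 2 := by
  have hsum (y : ℝ) : HasSum (fun n ↦ y ^ (n + 2) / (n + 2).factorial) (exp y - 1 - y) := by
    have := (hasSum_nat_add_iff' 2).mpr (NormedSpace.expSeries_div_hasSum_exp y)
    simpa [← Real.exp_eq_exp_ℝ, Finset.sum_range_succ, sub_sub] using this
  have hterm (n : ℕ) : x ^ (n + 2) / (n + 2).factorial ≤
      x ^ 2 * (1 ^ (n + 2) / (n + 2).factorial) := by
    have hxn : x ^ n ≤ 1 := (le_abs_self _).trans (abs_pow x n ▸ pow_le_one₀ (abs_nonneg x) hx)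
    calc x ^ (n + 2) / (n + 2).factorial = x ^ n * x ^ 2 / (n + 2).factorial := by rw [pow_add]
      _ ≤ 1 * x ^ 2 / (n + 2).factorial := by gcongr
      _ = _ := by ring
  linarith [hasSum_le hterm (hsum x) ((hsum 1).mul_left (x ^ 2))]

section Moments

variable {Ω : Type*} [MeasurableSpace Ω] {μ : Measure Ω} [IsProbabilityMeasure μ]

theorem log_integral_exp_le_integral_add_mul_integral_sq {X : Ω → ℝ}
    (hXm : AEStronglyMeasurable X μ) (hX : ∀ᵐ ω ∂μ, |X ω| ≤ 1) :
    log (∫ ω, exp (X ω) ∂μ) ≤ ∫ ω, X ω ∂μ + (exp 1 - 2) * ∫ ω, X ω ^ 2 ∂μ := by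
  have hX_int : Integrable X μ := .of_bound hXm 1 hX
  have hX2_int : Integrable (fun ω ↦ X ω ^ 2) μ :=
    .of_bound (hXm.pow 2) 1 (by filter_upwards [hX] with ω hω; simpa using hω)
  have hexp_int : Integrable (fun ω ↦ exp (X ω)) μ :=
    .of_bound (continuous_exp.comp_aestronglyMeasurable hXm) (exp 1) (by
      filter_upwards [hX] with ω hω
      simpa using (le_abs_self _).trans hω)
  have hlin_int : Integrable (fun ω ↦ 1 + X ω) μ := (integrable_const 1).add hX_int
  have hquad_int : Integrable (fun ω ↦ (exp 1 - 2) * X ω ^ 2) μ := hX2_int.const_mul _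
  calc log (∫ ω, exp (X ω) ∂μ) ≤ ∫ ω, exp (X ω) ∂μ - 1 :=
        log_le_sub_one_of_pos (integral_exp_pos hexp_int)
    _ ≤ ∫ ω, (1 + X ω + (exp 1 - 2) * X ω ^ 2) ∂μ - 1 := by
        refine sub_le_sub_right (integral_mono_ae hexp_int (hlin_int.add hquad_int) ?_) 1
        filter_upwards [hX] with ω hω using exp_le_one_add_add_exp_one_sub_two_mul_sq hω
    _ = ∫ ω, X ω ∂μ + (exp 1 - 2) * ∫ ω, X ω ^ 2 ∂μ := by
        rw [integral_add hlin_int hquad_int, integral_add (integrable_const 1) hX_int,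
          integral_const_mul]
        simp only [integral_const, probReal_univ, smul_eq_mul, one_mul]
        ring

variable {y : Ω → ℝ}

theorem sq_sub_sub_sq_sub_eq (g m t : ℝ) :
    (g - t) ^ 2 - (m - t) ^ 2 = (m - g) ^ 2 + 2 * (m - g) * (t - m) := by
  ring

theorem integral_sub_integral_eq_zero (hy : Integrable y μ) : ∫ ω, (y ω - μ[y]) ∂μ = 0 := by
  rw [integral_sub hy (integrable_const _)]
  simp

theorem integral_sq_sub_sub_sq_sub (hy : Integrable y μ) (g : ℝ) :
    ∫ ω, ((g - y ω) ^ 2 - (μ[y] - y ω) ^ 2) ∂μ = (μ[y] - g) ^ 2 := by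
  have hd_int : Integrable (fun ω ↦ 2 * (μ[y] - g) * (y ω - μ[y])) μ :=
    (hy.sub (integrable_const _)).const_mul _
  simp_rw [sq_sub_sub_sq_sub_eq]
  rw [integral_add (integrable_const _) hd_int, integral_const_mul,
    integral_sub_integral_eq_zero hy]
  simp

theorem integral_sq_sub_sub_sq_sub_sq (hy : MemLp y 2 μ) (g : ℝ) :
    ∫ ω, ((g - y ω) ^ 2 - (μ[y] - y ω) ^ 2) ^ 2 ∂μ
      = (μ[y] - g) ^ 2 * ((μ[y] - g) ^ 2 + 4 * Var[y; μ]) := by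
  set c := μ[y] - g
  have hy_int : Integrable y μ := hy.integrable one_le_two
  have hd : MemLp (fun ω ↦ y ω - μ[y]) 2 μ := hy.sub (memLp_const _)
  have hd_int : Integrable (fun ω ↦ 4 * c ^ 3 * (y ω - μ[y])) μ :=
    (hd.integrable one_le_two).const_mul _
  have hd2_int : Integrable (fun ω ↦ 4 * c ^ 2 * (y ω - μ[y]) ^ 2) μ :=
    hd.integrable_sq.const_mul _
  have hexpand (ω : Ω) : ((g - y ω) ^ 2 - (μ[y] - y ω) ^ 2) ^ 2
      = c ^ 4 + (4 * c ^ 3 * (y ω - μ[y]) + 4 * c ^ 2 * (y ω - μ[y]) ^ 2) := by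
    rw [sq_sub_sub_sq_sub_eq]
    ring
  simp_rw [hexpand]
  have hsum_int : Integrable
      (fun ω ↦ 4 * c ^ 3 * (y ω - μ[y]) + 4 * c ^ 2 * (y ω - μ[y]) ^ 2) μ := hd_int.add hd2_int
  rw [integral_add (integrable_const _) hsum_int, integral_add hd_int hd2_int,
    integral_const_mul, integral_const_mul, integral_sub_integral_eq_zero hy_int,
    ← variance_eq_integral hy.aestronglyMeasurable.aemeasurable]
  simp only [integral_const, probReal_univ, smul_eq_mul, one_mul]
  ring

theorem log_integral_exp_neg_sq_sub_sub_sq_sub_le {b g γ : ℝ} (hy : AEMeasurable y μ)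
    (hyb : ∀ᵐ ω ∂μ, |y ω| ≤ 2 * b) (hg : |g| ≤ b) (hγ0 : 0 ≤ γ)
    (hγ : γ ≤ 1 / (72 * (exp 1 - 2) * b ^ 2)) :
    log (∫ ω, exp (-2 * γ * ((g - y ω) ^ 2 - (μ[y] - y ω) ^ 2)) ∂μ)
      ≤ -2 * γ * (1 - 72 * (exp 1 - 2) * γ * b ^ 2) * (μ[y] - g) ^ 2 := by
  set Z : Ω → ℝ := fun ω ↦ (g - y ω) ^ 2 - (μ[y] - y ω) ^ 2
  have he : 2 / 3 ≤ exp 1 - 2 := by linarith [exp_one_gt_d9]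
  have hγb : γ * (72 * (exp 1 - 2) * b ^ 2) ≤ 1 :=
    mul_le_of_le_div₀ zero_le_one (by positivity) hγ
  obtain ⟨hg₁, hg₂⟩ := abs_le.mp hg
  have hyb' : ∀ᵐ ω ∂μ, ‖y ω‖ ≤ 2 * b := by simpa only [Real.norm_eq_abs] using hyb
  have hy_Lp : MemLp y 2 μ := .of_bound hy.aestronglyMeasurable (2 * b) hyb'
  have hm : |μ[y]| ≤ 2 * b := by simpa using norm_integral_le_of_norm_le_const hyb'
  obtain ⟨hm₁, hm₂⟩ := abs_le.mp hm
  have hvar : Var[y; μ] ≤ 4 * b ^ 2 := by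
    have := variance_le_sq_of_bounded (a := -(2 * b)) (b := 2 * b)
      (by filter_upwards [hyb] with ω hω using abs_le.mp hω) hy
    linarith
  have hZm : AEStronglyMeasurable Z μ := by fun_prop
  have hX : ∀ᵐ ω ∂μ, |-2 * γ * Z ω| ≤ 1 := by
    filter_upwards [hyb] with ω hω
    obtain ⟨hω₁, hω₂⟩ := abs_le.mp hω
    have hZ : |Z ω| ≤ 16 * b ^ 2 :=
      abs_le.mpr ⟨by nlinarith [sq_nonneg (g - y ω)], by nlinarith [sq_nonneg (μ[y] - y ω)]⟩
    rw [abs_mul, abs_mul, abs_neg, abs_two, abs_of_nonneg hγ0]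
    calc 2 * γ * |Z ω| ≤ 2 * γ * (16 * b ^ 2) := by gcongr
      _ ≤ γ * (72 * (exp 1 - 2) * b ^ 2) := by nlinarith [mul_nonneg hγ0 (sq_nonneg b)]
      _ ≤ 1 := hγb
  have hmgf := log_integral_exp_le_integral_add_mul_integral_sq (hZm.const_mul (-2 * γ)) hX
  simp_rw [mul_pow, integral_const_mul] at hmgf
  rw [integral_sq_sub_sub_sq_sub (hy_Lp.integrable one_le_two),
    integral_sq_sub_sub_sq_sub_sq hy_Lp] at hmgf
  have hc : (μ[y] - g) ^ 2 ≤ 9 * b ^ 2 := by nlinarith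
  have hmoment : (μ[y] - g) ^ 2 * ((μ[y] - g) ^ 2 + 4 * Var[y; μ])
      ≤ (μ[y] - g) ^ 2 * (36 * b ^ 2) := by
    gcongr
    nlinarith
  calc _ ≤ _ := hmgf
    _ ≤ -2 * γ * (μ[y] - g) ^ 2
          + (exp 1 - 2) * ((-2) ^ 2 * γ ^ 2 * ((μ[y] - g) ^ 2 * (36 * b ^ 2))) := by
        gcongr
    _ = _ := by ring

end Moments

section TransitionModel

variable {pol : PolicyKer S A}

theorem IsPolicy.measurable_integral (hpol : IsPolicy pol) (n : ℕ) {f : S × A → ℝ}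
    (hf : Measurable f) : Measurable fun s ↦ ∫ a, f (s, a) ∂pol n s := by
  let κ : Kernel S A := ⟨pol n, hpol.2 n⟩
  have : IsMarkovKernel κ := ⟨hpol.1 n⟩
  exact (hf.stronglyMeasurable.integral_kernel_prod_right' (κ := κ)).measurable

theorem IsPolicy.abs_integral_le (hpol : IsPolicy pol) (n : ℕ) {f : S × A → ℝ} {b : ℝ}
    (hf : ∀ sa, |f sa| ≤ b) (s : S) : |∫ a, f (s, a) ∂pol n s| ≤ b := by
  have := hpol.1 n s
  simpa using norm_integral_le_of_norm_le_const (μ := pol n s) (.of_forall fun a ↦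
    (Real.norm_eq_abs (f (s, a))).trans_le (hf (s, a)))

theorem excessTD_eq_sq_sub_sub_sq_sub (M : EpisodicMDP S A) (h : ℕ) (fh fnext : S × A → ℝ)
    (s : S) (a : A) (r : ℝ) (s' : S) :
    excessTD M pol h fh fnext (s, a, r, s')
      = (fh (s, a) - (r + ∫ a', fnext (s', a') ∂pol (h + 1) s')) ^ 2
        - (bellmanOp M pol h fnext (s, a) - (r + ∫ a', fnext (s', a') ∂pol (h + 1) s')) ^ 2 := by
  simp only [excessTD, tdLoss]
  ring

theorem integral_reward_add_integral_eq_bellmanOp (M : EpisodicMDP S A) (hpol : IsPolicy pol)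
    {b : ℝ} (h : ℕ) (s : S) (a : A) {fnext : S × A → ℝ} (hfnm : Measurable fnext)
    (hfnb : ∀ sa, |fnext sa| ≤ b) {ζ : Measure (ℝ × S)} [IsProbabilityMeasure ζ]
    (hmarg : ζ.map Prod.snd = M.P h (s, a)) (hrb : ∀ᵐ z ∂ζ, |z.1| ≤ b)
    (hrmean : ∫ z, z.1 ∂ζ = M.r h (s, a)) :
    ∫ z, (z.1 + ∫ a', fnext (z.2, a') ∂pol (h + 1) z.2) ∂ζ = bellmanOp M pol h fnext (s, a) := by
  have hV := hpol.measurable_integral (h + 1) hfnm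
  have hr_int : Integrable (fun z : ℝ × S ↦ z.1) ζ :=
    .of_bound measurable_fst.aestronglyMeasurable b (by simpa only [Real.norm_eq_abs] using hrb)
  have hV_int : Integrable (fun z : ℝ × S ↦ ∫ a', fnext (z.2, a') ∂pol (h + 1) z.2) ζ :=
    .of_bound (hV.comp measurable_snd).aestronglyMeasurable b
      (.of_forall fun z ↦ by simpa only [Real.norm_eq_abs] using hpol.abs_integral_le _ hfnb z.2)
  rw [integral_add hr_int hV_int, hrmean, bellmanOp, ← hmarg,
    integral_map measurable_snd.aemeasurable hV.aestronglyMeasurable]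

end TransitionModel

theorem excess_td_exponential_moment_general
    (M : EpisodicMDP S A) (b : ℝ)
    (pol : PolicyKer S A) (hpol : IsPolicy pol)
    (h : ℕ) (s : S) (a : A)
    (fh fnext : S × A → ℝ) (hfnm : Measurable fnext)
    (hfhb : ∀ sa, fh sa ∈ Set.Icc (-b) b) (hfnb : ∀ sa, fnext sa ∈ Set.Icc (-b) b)
    (ζ : Measure (ℝ × S)) [IsProbabilityMeasure ζ]
    (hmarg : ζ.map Prod.snd = M.P h (s, a))
    (hrb : ∀ᵐ z ∂ζ, |z.1| ≤ b)
    (hrmean : ∫ z, z.1 ∂ζ = M.r h (s, a))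
    (γ : ℝ) (hγ0 : 0 ≤ γ) (hγ : γ ≤ 1 / (72 * (Real.exp 1 - 2) * b ^ 2)) :
    Real.log (∫ z, Real.exp (-2 * γ * excessTD M pol h fh fnext (s, a, z.1, z.2)) ∂ζ)
      ≤ -2 * γ * (1 - 72 * (Real.exp 1 - 2) * γ * b ^ 2) *
          (bellmanErr M pol h fh fnext (s, a)) ^ 2 := by
  have hfnb' (sa : S × A) : |fnext sa| ≤ b := abs_le.mpr (hfnb sa)
  have hy : Measurable fun z : ℝ × S ↦ z.1 + ∫ a', fnext (z.2, a') ∂pol (h + 1) z.2 :=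
    measurable_fst.add ((hpol.measurable_integral (h + 1) hfnm).comp measurable_snd)
  have hyb : ∀ᵐ z ∂ζ, |z.1 + ∫ a', fnext (z.2, a') ∂pol (h + 1) z.2| ≤ 2 * b := by
    filter_upwards [hrb] with z hz
    linarith [abs_add_le z.1 (∫ a', fnext (z.2, a') ∂pol (h + 1) z.2),
      hpol.abs_integral_le (h + 1) hfnb' z.2]
  have hmean := integral_reward_add_integral_eq_bellmanOp M hpol h s a hfnm hfnb' hmarg hrb hrmean
  simp_rw [excessTD_eq_sq_sub_sub_sq_sub, bellmanErr, ← hmean]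
  exact log_integral_exp_neg_sq_sub_sub_sq_sub_le hy.aemeasurable hyb (abs_le.mpr (hfhb _)) hγ0 hγ

/-- **Exponential-moment bound for the negated excess TD loss.**  Under the one-step
transition model of a step `h` at `(s,a)` (conditional reward bounded by `b` with mean
`r_h(s,a)`, next state distributed as `P_h(·|s,a)`), for functions bounded by `b` and any
`0 ≤ γ ≤ 1/(72(e−2)b²)`,
`ln E[exp(−2γ ΔL) | s,a] ≤ −2γ (1 − 72(e−2) γ b²) E_h^{π̃}(f_h,f_{h+1})(s,a)²`. -/
theorem excess_td_exponential_moment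
    (M : EpisodicMDP S A) (b : ℝ) (hb : 1 ≤ b) (hr : ∀ h sa, |M.r h sa| ≤ b)
    (pol : PolicyKer S A) (hpol : IsPolicy pol)
    (h : ℕ) (s : S) (a : A)
    (fh fnext : S × A → ℝ) (hfhm : Measurable fh) (hfnm : Measurable fnext)
    (hfhb : ∀ sa, fh sa ∈ Set.Icc (-b) b) (hfnb : ∀ sa, fnext sa ∈ Set.Icc (-b) b)
    (ζ : Measure (ℝ × S)) [IsProbabilityMeasure ζ]
    (hmarg : ζ.map Prod.snd = M.P h (s, a))
    (hrb : ∀ᵐ z ∂ζ, |z.1| ≤ b)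
    (hrmean : ∫ z, z.1 ∂ζ = M.r h (s, a))
    (γ : ℝ) (hγ0 : 0 ≤ γ) (hγ : γ ≤ 1 / (72 * (Real.exp 1 - 2) * b ^ 2)) :
    Real.log (∫ z, Real.exp (-2 * γ * excessTD M pol h fh fnext (s, a, z.1, z.2)) ∂ζ)
      ≤ -2 * γ * (1 - 72 * (Real.exp 1 - 2) * γ * b ^ 2) *
          (bellmanErr M pol h fh fnext (s, a)) ^ 2 :=
  excess_td_exponential_moment_general M b pol hpol h s a fh fnext hfnm hfhb hfnb ζ hmarg hrb hrmean
    γ hγ0 hγ
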